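/- For any two tones (v,f) and (v',f') and any T>0, with dist((v,f),(v',f')) := ((1/T)∫_0^T |v e^{2πift} - v' e^{2πif't}|^2 dt)^{1/2}, one has dist((v,f),(v',f')) ≍ |v|·min(1, T|f-f'|) + |v-v'| up to universal multiplicative constants. -/

import Mathlib

/-!
Multiplying by `e^{-2πif't}` turns the distance into the root mean square over `(0, T]` of
`v e(ξt) - v'`, where `ξ = f - f'` and `e(x) = e^{2πix}`. The upper bound is pointwise:
`|v e(ξt) - v'| ≤ |v| |e(ξt) - 1| + |v - v'|` and `|e(ξt) - 1| ≤ 2π min(1, T|ξ|)`.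
For the lower bound let `a` be the mean of `v e(ξt)`. The mean square splits as
`|a - v'|² + (|v|² - |a|²)`, and `|a| = |v| |sin(πξT) / (πξT)|`, so the elementary bound
`|sin x| ≤ |x| (1 - min(1, x²) / 8)` makes the second term at least `|v|² min(1, T|ξ|)² / 8`.
The first term controls `|v - v'|` up to `|v - a| ≤ 2π |v| min(1, T|ξ|)`.
-/

open MeasureTheory Real

/-- Tone distance: `((1/T) ∫_0^T |v e^{2πift} - v' e^{2πif't}|² dt)^{1/2}`. -/
noncomputable def toneDist (v v' : ℂ) (f f' T : ℝ) : ℝ :=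
  Real.sqrt ((1 / T) * ∫ t in (0:ℝ)..T,
    ‖v * Complex.exp (2 * π * f * t * Complex.I)
      - v' * Complex.exp (2 * π * f' * t * Complex.I)‖ ^ 2)

open Complex Set

section Variance

variable {α E : Type*} [MeasurableSpace α] {μ : Measure α}
  [NormedAddCommGroup E] [InnerProductSpace ℝ E] [CompleteSpace E]

theorem integral_norm_sub_sq [IsProbabilityMeasure μ] {g : α → E} (hg : MemLp g 2 μ) (w : E) :
    ∫ x, ‖g x - w‖ ^ 2 ∂μ =
      ‖(∫ x, g x ∂μ) - w‖ ^ 2 + ((∫ x, ‖g x‖ ^ 2 ∂μ) - ‖∫ x, g x ∂μ‖ ^ 2) := by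
  have hgi : Integrable g μ := hg.integrable one_le_two
  have hg2 : Integrable (fun x ↦ ‖g x‖ ^ 2) μ := hg.integrable_norm_pow two_ne_zero
  have hinner : Integrable (fun x ↦ 2 * inner ℝ w (g x)) μ := (hgi.const_inner w).const_mul 2
  have hexpand (y : E) : ‖y - w‖ ^ 2 = ‖y‖ ^ 2 - 2 * inner ℝ w y + ‖w‖ ^ 2 := by
    rw [norm_sub_sq_real, real_inner_comm]
  simp only [hexpand]
  rw [integral_add (f := fun x ↦ ‖g x‖ ^ 2 - 2 * inner ℝ w (g x)) (hg2.sub hinner)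
    (integrable_const _), integral_sub hg2 hinner, integral_const_mul, integral_inner hgi]
  simp only [integral_const, probReal_univ, one_smul]
  ring

theorem average_norm_sub_sq [IsFiniteMeasure μ] [NeZero μ] {g : α → E} (hg : MemLp g 2 μ)
    (w : E) :
    ⨍ x, ‖g x - w‖ ^ 2 ∂μ =
      ‖(⨍ x, g x ∂μ) - w‖ ^ 2 + ((⨍ x, ‖g x‖ ^ 2 ∂μ) - ‖⨍ x, g x ∂μ‖ ^ 2) :=
  integral_norm_sub_sq (hg.smul_measure (by simp [NeZero.ne μ])) w

end Variance

theorem Real.abs_sin_le_abs_mul_one_sub_min_sq (x : ℝ) :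
    |Real.sin x| ≤ |x| * (1 - min 1 (x ^ 2) / 8) := by
  wlog hx : 0 ≤ x generalizing x
  · simpa [abs_neg, Real.sin_neg] using this (-x) (by linarith)
  rw [abs_of_nonneg hx]
  rcases le_or_gt x 1 with hx1 | hx1
  · have hsin := abs_le.1 (Real.sin_bound (abs_le.2 ⟨by linarith, hx1⟩))
    have hsin0 : 0 ≤ Real.sin x := sin_nonneg_of_nonneg_of_le_pi hx (by linarith [pi_gt_three])
    rw [abs_of_nonneg hsin0, min_eq_right (by nlinarith)]
    rw [abs_of_nonneg hx] at hsin
    nlinarith [pow_le_pow_of_le_one hx hx1 (show 3 ≤ 5 by norm_num), pow_nonneg hx 3]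
  rw [min_eq_left (by nlinarith)]
  rcases le_or_gt x (8 / 7) with hx2 | hx2
  · -- `sin` is 1-Lipschitz and `sin 1 ≤ 5/6 + 1/100`
    have hsin1 := abs_le.1 (Real.sin_bound (x := 1) (by norm_num))
    have hlip := abs_le.1 (abs_sin_sub_sin_le x 1)
    norm_num at hsin1
    rw [abs_of_nonneg (by linarith : (0:ℝ) ≤ x - 1)] at hlip
    rw [abs_le]
    constructor <;> nlinarith
  · nlinarith [abs_sin_le_one x]

noncomputable def tone (ξ t : ℝ) : ℂ := cexp (I * ↑(2 * π * ξ * t))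

theorem norm_tone (ξ t : ℝ) : ‖tone ξ t‖ = 1 := norm_exp_I_mul_ofReal _

@[fun_prop]
theorem continuous_tone (ξ : ℝ) : Continuous (tone ξ) := by
  unfold tone
  fun_prop

open scoped Interval in
theorem norm_intervalAverage_tone_le (ξ T : ℝ) :
    ‖⨍ t in 0..T, tone ξ t‖ ≤ 1 - min 1 ((π * ξ * T) ^ 2) / 8 := by
  rw [interval_average_eq, sub_zero]
  rcases eq_or_ne (ξ * T) 0 with hφ | hφ
  · rcases mul_eq_zero.1 hφ with rfl | rfl <;> simp [tone]
    exact inv_mul_le_one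
  have hc : I * ↑(2 * π * ξ) ≠ 0 := by simp [pi_ne_zero, left_ne_zero_of_mul hφ]
  have htone (t : ℝ) : tone ξ t = cexp (I * ↑(2 * π * ξ) * t) := by
    rw [tone, ofReal_mul _ t, ← mul_assoc]
  have hint : ∫ t in 0..T, tone ξ t = (tone ξ T - 1) / (I * ↑(2 * π * ξ)) := by
    rw [intervalIntegral.integral_congr fun t _ ↦ htone t, integral_exp_mul_complex hc, htone]
    simp
  have key := Real.abs_sin_le_abs_mul_one_sub_min_sq (π * ξ * T)
  rw [← div_le_iff₀' (abs_pos.2 (by rw [mul_assoc]; exact mul_ne_zero pi_ne_zero hφ))] at key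
  rw [hint, norm_smul, norm_div, tone, norm_exp_I_mul_ofReal_sub_one]
  refine Eq.trans_le ?_ key
  simp only [norm_inv, norm_mul, norm_I, norm_real, Real.norm_ofNat, Real.norm_eq_abs, abs_mul,
    abs_of_pos pi_pos]
  field_simp

theorem norm_tone_sub_one_le {ξ T t : ℝ} (ht : t ∈ Ioc 0 T) :
    ‖tone ξ t - 1‖ ≤ 2 * π * min 1 (T * |ξ|) := by
  rcases le_total (T * |ξ|) 1 with hs | hs
  · rw [min_eq_right hs]
    refine norm_exp_I_mul_ofReal_sub_one_le.trans ?_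
    rw [Real.norm_eq_abs, abs_mul, abs_of_pos ht.1, abs_mul, abs_of_pos two_pi_pos]
    have := mul_le_mul_of_nonneg_left ht.2 (mul_nonneg two_pi_pos.le (abs_nonneg ξ))
    linarith
  · rw [min_eq_left hs]
    calc ‖tone ξ t - 1‖ ≤ ‖tone ξ t‖ + ‖(1 : ℂ)‖ := norm_sub_le _ _
      _ ≤ 2 * π * 1 := by rw [norm_tone, norm_one]; linarith [pi_gt_three]

theorem toneDist_eq_sqrt_setAverage (v v' : ℂ) (f f' : ℝ) {T : ℝ} (hT : 0 ≤ T) :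
    toneDist v v' f f' T = √(⨍ t in Ioc 0 T, ‖v * tone (f - f') t - v'‖ ^ 2) := by
  have hrot (t : ℝ) : v * cexp (2 * π * f * t * I) - v' * cexp (2 * π * f' * t * I) =
      tone f' t * (v * tone (f - f') t - v') := by
    have hsum : (2 * π * f * t * I : ℂ) = I * ↑(2 * π * f' * t) + I * ↑(2 * π * (f - f') * t) := by
      push_cast; ring
    rw [hsum, Complex.exp_add, tone, tone]
    push_cast
    ring_nf
  simp only [toneDist, hrot, norm_mul, norm_tone, one_mul, setAverage_eq,
    Real.volume_real_Ioc_of_le hT, sub_zero, intervalIntegral.integral_of_le hT, smul_eq_mul,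
    one_div]

section Mean

variable (v v' : ℂ) (ξ : ℝ) {T : ℝ}

theorem memLp_const_mul_tone {p : ENNReal} {μ : Measure ℝ} [IsFiniteMeasure μ] :
    MemLp (fun t ↦ v * tone ξ t) p μ :=
  MemLp.of_bound (by fun_prop) ‖v‖ (ae_of_all _ fun t ↦ by rw [norm_mul, norm_tone, mul_one])

theorem norm_const_mul_tone_sub_le {t : ℝ} (ht : t ∈ Ioc 0 T) :
    ‖v * tone ξ t - v'‖ ≤ 2 * π * (‖v‖ * min 1 (T * |ξ|)) + ‖v - v'‖ := by
  rw [show v * tone ξ t - v' = v * (tone ξ t - 1) + (v - v') by ring]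
  refine (norm_add_le _ _).trans (add_le_add_left ?_ _)
  rw [norm_mul, mul_left_comm]
  exact mul_le_mul_of_nonneg_left (norm_tone_sub_one_le ht) (norm_nonneg v)

theorem sqrt_setAverage_norm_const_mul_tone_sub_sq_le (hT : 0 < T) :
    √(⨍ t in Ioc 0 T, ‖v * tone ξ t - v'‖ ^ 2) ≤
      2 * π * (‖v‖ * min 1 (T * |ξ|)) + ‖v - v'‖ := by
  have : NeZero (volume.restrict (Ioc 0 T)) := ⟨by simp [hT]⟩
  rw [Real.sqrt_le_left (by positivity), ← mem_Iic]
  refine Convex.average_mem (convex_Iic _) isClosed_Iic ?_ ?_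
  · exact ae_restrict_of_forall_mem measurableSet_Ioc fun t ht ↦
      pow_le_pow_left₀ (norm_nonneg _) (norm_const_mul_tone_sub_le v v' ξ ht) 2
  · exact Continuous.integrableOn_Ioc (by fun_prop)

theorem norm_setAverage_const_mul_tone_le (hT : 0 ≤ T) :
    ‖⨍ t in Ioc 0 T, v * tone ξ t‖ ≤ ‖v‖ * (1 - min 1 (T * |ξ|) ^ 2 / 8) := by
  have hS := norm_intervalAverage_tone_le ξ T
  rw [uIoc_of_le hT] at hS
  have hs : min 1 (T * |ξ|) ^ 2 ≤ min 1 ((π * ξ * T) ^ 2) := by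
    have hs0 : 0 ≤ min 1 (T * |ξ|) := by positivity
    have hφ : (π * ξ * T) ^ 2 = π ^ 2 * (T * |ξ|) ^ 2 := by rw [mul_pow T, sq_abs]; ring
    have hπ : 1 ≤ π ^ 2 := by nlinarith [pi_gt_three]
    refine le_min (pow_le_one₀ hs0 (min_le_left _ _))
      ((pow_le_pow_left₀ hs0 (min_le_right _ _) 2).trans ?_)
    rw [hφ]
    exact le_mul_of_one_le_left (sq_nonneg _) hπ
  have hmean : ⨍ t in Ioc 0 T, v * tone ξ t = v * ⨍ t in Ioc 0 T, tone ξ t := by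
    simp only [setAverage_eq, integral_const_mul, mul_smul_comm]
  rw [hmean, norm_mul]
  exact mul_le_mul_of_nonneg_left (by linarith) (norm_nonneg v)

theorem norm_setAverage_const_mul_tone_sub_le (hT : 0 < T) :
    ‖(⨍ t in Ioc 0 T, v * tone ξ t) - v‖ ≤ 2 * π * (‖v‖ * min 1 (T * |ξ|)) := by
  have : NeZero (volume.restrict (Ioc 0 T)) := ⟨by simp [hT]⟩
  rw [← dist_eq_norm, ← Metric.mem_closedBall]
  refine Convex.average_mem (convex_closedBall _ _) Metric.isClosed_closedBall ?_
    ((memLp_const_mul_tone v ξ).integrable one_le_two)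
  refine ae_restrict_of_forall_mem measurableSet_Ioc fun t ht ↦ ?_
  rw [Metric.mem_closedBall, dist_eq_norm, ← mul_sub_one, norm_mul, mul_left_comm]
  exact mul_le_mul_of_nonneg_left (norm_tone_sub_one_le ht) (norm_nonneg v)

theorem le_sqrt_setAverage_norm_const_mul_tone_sub_sq (hT : 0 < T) :
    ‖v‖ * min 1 (T * |ξ|) + ‖v - v'‖ ≤ 24 * √(⨍ t in Ioc 0 T, ‖v * tone ξ t - v'‖ ^ 2) := by
  have : NeZero (volume.restrict (Ioc 0 T)) := ⟨by simp [hT]⟩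
  set s := min 1 (T * |ξ|)
  set a := ⨍ t in Ioc 0 T, v * tone ξ t
  have ha := norm_setAverage_const_mul_tone_le v ξ hT.le
  have hav := norm_setAverage_const_mul_tone_sub_le v ξ hT
  have hvar : ⨍ t in Ioc 0 T, ‖v * tone ξ t - v'‖ ^ 2 = ‖a - v'‖ ^ 2 + (‖v‖ ^ 2 - ‖a‖ ^ 2) := by
    simp only [average_norm_sub_sq (memLp_const_mul_tone v ξ), norm_mul, norm_tone, mul_one,
      average_const, a]
  rw [hvar]
  set Q := ‖a - v'‖ ^ 2 + (‖v‖ ^ 2 - ‖a‖ ^ 2)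
  have hs0 : 0 ≤ s := by positivity
  have hs1 : s ≤ 1 := min_le_left _ _
  have h8 : 0 ≤ 1 - s ^ 2 / 8 := by nlinarith
  have ha_le : ‖a‖ ≤ ‖v‖ := ha.trans (mul_le_of_le_one_right (norm_nonneg v) (by nlinarith))
  have hQ₁ : ‖a - v'‖ ≤ √Q := Real.le_sqrt_of_sq_le (by nlinarith [norm_nonneg a])
  have hQ₂ : ‖v‖ * s / 3 ≤ √Q := by
    refine Real.le_sqrt_of_sq_le ?_
    have hsq : ‖a‖ ^ 2 ≤ (‖v‖ * (1 - s ^ 2 / 8)) ^ 2 := pow_le_pow_left₀ (norm_nonneg a) ha 2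
    nlinarith [sq_nonneg ‖a - v'‖, mul_nonneg (mul_nonneg (sq_nonneg ‖v‖) h8) (sq_nonneg s),
      sq_nonneg (‖v‖ * s)]
  have htri : ‖v - v'‖ ≤ ‖a - v‖ + ‖a - v'‖ := by
    rw [norm_sub_rev a v]
    exact norm_sub_le_norm_sub_add_norm_sub v a v'
  linarith [mul_le_mul_of_nonneg_left hQ₂ two_pi_pos.le,
    mul_le_mul_of_nonneg_right pi_lt_d2.le (Real.sqrt_nonneg Q), Real.sqrt_nonneg Q]

end Mean

/-- the tone distance is equivalent, up to universal constants,
to `|v| · min(1, T|f-f'|) + |v - v'|`. -/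
theorem tone_dist_equiv :
    ∃ c C : ℝ, 0 < c ∧ 0 < C ∧
      ∀ (v v' : ℂ) (f f' T : ℝ), 0 < T →
        c * (‖v‖ * min 1 (T * |f - f'|) + ‖v - v'‖) ≤ toneDist v v' f f' T ∧
        toneDist v v' f f' T ≤ C * (‖v‖ * min 1 (T * |f - f'|) + ‖v - v'‖) := by
  refine ⟨1 / 24, 8, by norm_num, by norm_num, fun v v' f f' T hT ↦ ?_⟩
  rw [toneDist_eq_sqrt_setAverage v v' f f' hT.le]
  have hlower := le_sqrt_setAverage_norm_const_mul_tone_sub_sq v v' (f - f') hT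
  have hupper := sqrt_setAverage_norm_const_mul_tone_sub_sq_le v v' (f - f') hT
  have hs : 0 ≤ ‖v‖ * min 1 (T * |f - f'|) := by positivity
  constructor
  · linarith
  · nlinarith [pi_lt_four, norm_nonneg (v - v')]
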